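/- The standard normal quantile function satisfies Φ⁻¹(u) ~ -√(-2 log(u √(-4π log u))) as u → 0⁺, and in particular Φ⁻¹(u) ~ -√(-2 log u). -/

import Mathlib

open Real MeasureTheory Filter Set

noncomputable def stdNormalPdf (t : ℝ) : ℝ := (Real.sqrt (2 * π))⁻¹ * Real.exp (-t ^ 2 / 2)

noncomputable def stdNormalCdf (z : ℝ) : ℝ := ∫ t in Set.Iic z, stdNormalPdf t

/-!
The Chernoff bound `Φ(z) ≤ exp (-z²/2)` and the crude lower bound `Φ(z) ≥ φ(z - 1)` (the density
is increasing on `(-∞, 0]`) squeeze `-2 log Φ(z)` between `z²` and `(z - 1)² + O(1)`, so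
`-2 log Φ(z) ~ z²` as `z → -∞`. Since `Φ⁻¹(u) → -∞` as `u → 0⁺`, substituting `z = Φ⁻¹(u)` gives
`-2 log u ~ Φ⁻¹(u)²`, i.e. `Φ⁻¹(u) ~ -√(-2 log u)`. The refined normalisation differs from
`-2 log u` by `log (-4π log u) = o(log u)`, so it is asymptotically equivalent as well.
-/

open Asymptotics ProbabilityTheory Topology

namespace Asymptotics

variable {α : Type*} {l : Filter α} {f g h : α → ℝ}

theorem IsEquivalent.sqrt (hfg : f ~[l] g) (hg : ∀ᶠ x in l, 0 ≤ g x) :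
    (fun x ↦ √(f x)) ~[l] fun x ↦ √(g x) := by
  obtain ⟨φ, hφ, hfφg⟩ := hfg.exists_eq_mul
  refine isEquivalent_iff_exists_eq_mul.mpr ⟨fun x ↦ √(φ x), ?_, ?_⟩
  · simpa [Function.comp_def] using (continuous_sqrt.tendsto 1).comp hφ
  · filter_upwards [hfφg, hg] with x hfx hgx
    simp [hfx, Real.sqrt_mul' _ hgx]

theorem IsEquivalent.of_le_of_le (hgf : ∀ᶠ x in l, g x ≤ f x) (hfh : ∀ᶠ x in l, f x ≤ h x)
    (hhg : h ~[l] g) (hg : ∀ᶠ x in l, 0 < g x) : f ~[l] g := by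
  have hhg_div := (isEquivalent_iff_tendsto_one (hg.mono fun x hx ↦ hx.ne')).mp hhg
  refine isEquivalent_of_tendsto_one <|
    tendsto_of_tendsto_of_tendsto_of_le_of_le' tendsto_const_nhds hhg_div ?_ ?_
  · filter_upwards [hgf, hg] with x hgfx hgx
    exact (one_le_div hgx).mpr hgfx
  · filter_upwards [hfh, hg] with x hfhx hgx
    exact div_le_div_of_nonneg_right hfhx hgx.le

end Asymptotics

theorem Monotone.tendsto_atBot_of_rightInverse_nhdsGT {F Q : ℝ → ℝ} {a : ℝ} (hF : Monotone F)
    (hpos : ∀ z, a < F z) (hQ : ∀ᶠ u in 𝓝[>] a, F (Q u) = u) : Tendsto Q (𝓝[>] a) atBot := by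
  refine tendsto_atBot.mpr fun M ↦ ?_
  filter_upwards [hQ, Ioo_mem_nhdsGT (hpos M)] with u hFQu hu
  by_contra! hMQ
  exact (hF hMQ.le).trans_eq hFQu |>.not_gt hu.2

theorem gaussianPDFReal_zero_one : gaussianPDFReal 0 1 = stdNormalPdf := by
  ext x
  simp [gaussianPDFReal, stdNormalPdf]

theorem stdNormalCdf_eq_cdf_gaussianReal : stdNormalCdf = cdf (gaussianReal 0 1) := by
  ext z
  have hnonneg : 0 ≤ ∫ t in Iic z, gaussianPDFReal 0 1 t :=
    setIntegral_nonneg measurableSet_Iic fun _ _ ↦ gaussianPDFReal_nonneg ..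
  rw [cdf_eq_real, measureReal_def, gaussianReal_apply_eq_integral _ one_ne_zero,
    ENNReal.toReal_ofReal hnonneg, gaussianPDFReal_zero_one, stdNormalCdf]

theorem stdNormalCdf_le_exp {z : ℝ} (hz : z ≤ 0) : stdNormalCdf z ≤ exp (-z ^ 2 / 2) := by
  have := measure_le_le_exp_mul_mgf (X := id) (μ := gaussianReal 0 1) z hz
    (integrable_exp_mul_gaussianReal z)
  rw [mgf_id_gaussianReal, ← exp_add] at this
  rw [stdNormalCdf_eq_cdf_gaussianReal, cdf_eq_real]
  convert this using 2
  · rfl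
  · simp only [NNReal.coe_one]
    ring

theorem stdNormalPdf_pos (t : ℝ) : 0 < stdNormalPdf t := by
  unfold stdNormalPdf
  positivity

theorem stdNormalPdf_sub_one_le_stdNormalCdf {z : ℝ} (hz : z ≤ 0) :
    stdNormalPdf (z - 1) ≤ stdNormalCdf z := by
  have hint : Integrable stdNormalPdf := gaussianPDFReal_zero_one ▸ integrable_gaussianPDFReal 0 1
  calc stdNormalPdf (z - 1) = stdNormalPdf (z - 1) * volume.real (Icc (z - 1) z) := by simp
    _ ≤ ∫ t in Icc (z - 1) z, stdNormalPdf t := by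
      refine setIntegral_ge_of_const_le_real measurableSet_Icc measure_Icc_lt_top.ne
        (fun t ht ↦ ?_) hint.integrableOn
      unfold stdNormalPdf
      have : t ^ 2 ≤ (z - 1) ^ 2 := by nlinarith [ht.1, ht.2]
      gcongr
    _ ≤ stdNormalCdf z :=
      setIntegral_mono_set hint.integrableOn
        (ae_of_all _ fun t ↦ (stdNormalPdf_pos t).le) Icc_subset_Iic_self.eventuallyLE

theorem stdNormalCdf_mono : Monotone stdNormalCdf :=
  stdNormalCdf_eq_cdf_gaussianReal ▸ (cdf _).mono

theorem stdNormalCdf_pos (z : ℝ) : 0 < stdNormalCdf z :=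
  (stdNormalPdf_pos _).trans_le <| (stdNormalPdf_sub_one_le_stdNormalCdf (min_le_right z 0)).trans
    (stdNormalCdf_mono (min_le_left z 0))

theorem sq_le_neg_two_mul_log_stdNormalCdf {z : ℝ} (hz : z ≤ 0) :
    z ^ 2 ≤ -2 * log (stdNormalCdf z) := by
  have := log_le_log (stdNormalCdf_pos z) (stdNormalCdf_le_exp hz)
  rw [log_exp] at this
  linarith

theorem neg_two_mul_log_stdNormalCdf_le {z : ℝ} (hz : z ≤ 0) :
    -2 * log (stdNormalCdf z) ≤ (z - 1) ^ 2 + 2 * log √(2 * π) := by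
  have := log_le_log (stdNormalPdf_pos _) (stdNormalPdf_sub_one_le_stdNormalCdf hz)
  rw [stdNormalPdf, log_mul (by positivity) (exp_pos _).ne', log_inv, log_exp] at this
  linarith

theorem isEquivalent_neg_two_mul_log_stdNormalCdf :
    (fun z ↦ -2 * log (stdNormalCdf z)) ~[atBot] fun z ↦ z ^ 2 := by
  have hsq : Tendsto (norm ∘ fun z : ℝ ↦ z ^ 2) atBot atTop := by
    simpa [Function.comp_def] using
      (tendsto_pow_atTop two_ne_zero).comp (tendsto_abs_atBot_atTop (G := ℝ))
  have hshift : (fun z : ℝ ↦ z - 1) ~[atBot] id :=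
    IsEquivalent.refl.sub_isLittleO (isLittleO_const_id_atBot 1)
  have hupper : (fun z : ℝ ↦ (z - 1) ^ 2 + 2 * log √(2 * π)) ~[atBot] fun z ↦ z ^ 2 :=
    (hshift.pow 2).add_const_of_norm_tendsto_atTop hsq
  refine IsEquivalent.of_le_of_le ?_ ?_ hupper ?_
  · filter_upwards [eventually_le_atBot 0] with z hz using sq_le_neg_two_mul_log_stdNormalCdf hz
  · filter_upwards [eventually_le_atBot 0] with z hz using neg_two_mul_log_stdNormalCdf_le hz
  · filter_upwards [eventually_lt_atBot 0] with z hz using sq_pos_of_neg hz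

theorem isEquivalent_neg_two_mul_log_mul_sqrt_log {c : ℝ} (hc : 0 < c) :
    (fun u ↦ -2 * log (u * √(-c * log u))) ~[𝓝[>] 0] fun u ↦ -2 * log u := by
  have hsmall : (fun u ↦ log c + log (-log u)) =o[𝓝[>] 0] fun u ↦ -2 * log u := by
    have hlog : (fun t ↦ log c + log t) =o[atTop] id :=
      (isLittleO_const_id_atTop _).add isLittleO_log_id_atTop
    have hneg_log : Tendsto (fun u ↦ -log u) (𝓝[>] 0) atTop :=
      tendsto_neg_atBot_atTop.comp tendsto_log_nhdsGT_zero
    refine ((hlog.comp_tendsto hneg_log).const_mul_right' (IsUnit.mk0 2 two_ne_zero)).congr_right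
      fun u ↦ ?_
    simp only [Function.comp_apply, id]
    ring
  refine (IsEquivalent.refl.sub_isLittleO hsmall).congr_left ?_
  filter_upwards [Ioo_mem_nhdsGT one_pos] with u hu
  have hlogu : log u < 0 := log_neg hu.1 hu.2
  have hlog_mul : log (-c * log u) = log c + log (-log u) := by
    rw [neg_mul_comm, log_mul hc.ne' (by linarith)]
  rw [Pi.sub_apply, log_mul hu.1.ne' (sqrt_pos.mpr (by nlinarith)).ne', log_sqrt (by nlinarith),
    hlog_mul]
  ring

/-- The standard normal quantile function satisfies
Φ⁻¹(u) ~ -√(-2 log(u √(-4π log u))) as u → 0⁺, and in particular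
Φ⁻¹(u) ~ -√(-2 log u). -/
theorem stdNormal_quantile_asymp (Q : ℝ → ℝ)
    (hQ : ∀ u ∈ Set.Ioo (0 : ℝ) 1, stdNormalCdf (Q u) = u) :
    Tendsto (fun u : ℝ =>
      Q u / (-Real.sqrt (-2 * Real.log (u * Real.sqrt (-(4 * π) * Real.log u)))))
      (nhdsWithin 0 (Set.Ioi 0)) (nhds 1) ∧
    Tendsto (fun u : ℝ => Q u / (-Real.sqrt (-2 * Real.log u)))
      (nhdsWithin 0 (Set.Ioi 0)) (nhds 1) := by
  have hQinv : ∀ᶠ u in 𝓝[>] 0, stdNormalCdf (Q u) = u :=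
    eventually_of_mem (Ioo_mem_nhdsGT one_pos) hQ
  have hQ_atBot : Tendsto Q (𝓝[>] 0) atBot :=
    stdNormalCdf_mono.tendsto_atBot_of_rightInverse_nhdsGT stdNormalCdf_pos hQinv
  have hlog : ∀ᶠ u in 𝓝[>] (0 : ℝ), 0 < -2 * log u := by
    filter_upwards [Ioo_mem_nhdsGT one_pos] with u hu
    nlinarith [log_neg hu.1 hu.2]
  have hlogQ : (fun u ↦ -2 * log u) ~[𝓝[>] 0] fun u ↦ Q u ^ 2 :=
    (isEquivalent_neg_two_mul_log_stdNormalCdf.comp_tendsto hQ_atBot).congr_left <| by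
      filter_upwards [hQinv] with u hu
      simp [hu]
  have hsqrt : (fun u ↦ √(-2 * log u)) ~[𝓝[>] 0] fun u ↦ -Q u :=
    (hlogQ.sqrt (.of_forall fun u ↦ sq_nonneg _)).congr_right <| by
      filter_upwards [hQ_atBot.eventually (eventually_le_atBot 0)] with u hu
      rw [sqrt_sq_eq_abs, abs_of_nonpos hu]
  have hQ_equiv : Q ~[𝓝[>] 0] fun u ↦ -√(-2 * log u) :=
    hsqrt.symm.neg.congr_left (.of_forall fun u ↦ neg_neg (Q u))
  have hD := isEquivalent_neg_two_mul_log_mul_sqrt_log (mul_pos four_pos pi_pos)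
  have hQ_equiv' : Q ~[𝓝[>] 0] fun u ↦ -√(-2 * log (u * √(-(4 * π) * log u))) :=
    hQ_equiv.trans (hD.sqrt (hlog.mono fun u hu ↦ hu.le)).symm.neg
  refine ⟨(isEquivalent_iff_tendsto_one ?_).mp hQ_equiv',
    (isEquivalent_iff_tendsto_one ?_).mp hQ_equiv⟩
  · filter_upwards [hD.eventually_pos hlog] with u hu using neg_ne_zero.mpr (sqrt_pos.mpr hu).ne'
  · filter_upwards [hlog] with u hu using neg_ne_zero.mpr (sqrt_pos.mpr hu).ne'
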